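/- Let h_1, …, h_n ∈ ℝ^d be pairwise distinct node representations and let φ : {1,…,n} → {1,…,n} be any mapping. Then there exist a hidden dimension d' ∈ ℕ, a weight matrix W ∈ ℝ^{d'×2d}, a bias vector b ∈ ℝ^{d'}, and a vector a ∈ ℝ^{d'} such that the scoring function e(h_i, h_j) = aᵀ · ReLU(W·[h_i ‖ h_j] + b), using the ReLU activation instead of LeakyReLU, satisfies, for every i ∈ {1,…,n} and every j ≠ φ(i), e(h_i, h_{φ(i)}) > e(h_i, h_j). That is, the dynamic-attention property of the GATv2 architecture holds for the ReLU activation as well. -/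

import Mathlib

/-!
Concatenation embeds the pairs `(i, j)` injectively into `ℝ^{2d}`, and a generic linear
functional `u` (one avoiding finitely many hyperplanes) keeps them apart, so each pair gets its
own real number `u ⬝ᵥ [h i ‖ h j]`. On finitely many points of the line every function is a
one-hidden-layer ReLU network: a combination of hats `relu (s + δ) - 2 relu s + relu (s - δ)`,
with `δ` the smallest gap, centred at the points. With every row of `W` equal to `u`, the network
interpolating the indicator of the pairs `(i, φ i)` scores them `1` and every other pair `0`.
-/

open Matrix

/-- ReLU activation. -/
noncomputable def relu (x : ℝ) : ℝ := max x 0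

/-- The GATv2-style scoring function with ReLU activation:
`e(q,k) = aᵀ · ReLU(W·[q ‖ k] + b)`. -/
noncomputable def gatv2ReluScore {d d' : ℕ} (W : Matrix (Fin d') (Fin (d + d)) ℝ)
    (b a : Fin d' → ℝ) (q k : Fin d → ℝ) : ℝ :=
  a ⬝ᵥ fun r => relu (W.mulVec (Fin.append q k) r + b r)

open Function

theorem Module.exists_dual_injective_comp {K M ι : Type*} [Field K] [Infinite K] [AddCommGroup M]
    [Module K M] [Finite ι] {x : ι → M} (hx : Function.Injective x) :
    ∃ f : Module.Dual K M, Function.Injective (f ∘ x) := by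
  obtain ⟨f, hf⟩ := Module.exists_dual_forall_apply_ne_zero (K := K)
    (fun pq : {pq : ι × ι // pq.1 ≠ pq.2} => x pq.1.1 - x pq.1.2)
    (fun pq => sub_ne_zero.mpr (hx.ne pq.2))
  refine ⟨f, fun p q hpq => ?_⟩
  by_contra hne
  exact hf ⟨(p, q), hne⟩ (by simpa [sub_eq_zero] using hpq)

theorem Matrix.exists_dotProduct_injective {K m ι : Type*} [Field K] [Infinite K] [Fintype m]
    [Finite ι] {x : ι → m → K} (hx : Injective x) :
    ∃ u : m → K, Injective fun p => u ⬝ᵥ x p := by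
  classical
  obtain ⟨f, hf⟩ := Module.exists_dual_injective_comp (K := K) hx
  refine ⟨(dotProductEquiv K m).symm f, ?_⟩
  have hu : ∀ v, (dotProductEquiv K m).symm f ⬝ᵥ v = f v := fun v =>
    LinearMap.congr_fun ((dotProductEquiv K m).apply_symm_apply f) v
  simp only [hu]
  exact hf

theorem exists_pos_le_abs_sub_of_injective {ι : Type*} [Finite ι] {t : ι → ℝ}
    (ht : Injective t) : ∃ δ > 0, ∀ p q, p ≠ q → δ ≤ |t p - t q| := by
  rcases isEmpty_or_nonempty {pq : ι × ι // pq.1 ≠ pq.2} with hempty | hnonempty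
  · exact ⟨1, one_pos, fun p q hpq => (hempty.false ⟨(p, q), hpq⟩).elim⟩
  obtain ⟨pq, hpq⟩ := Finite.exists_min fun pq : {pq : ι × ι // pq.1 ≠ pq.2} =>
    |t pq.1.1 - t pq.1.2|
  exact ⟨_, abs_pos.mpr (sub_ne_zero.mpr (ht.ne pq.2)), fun p q hne => hpq ⟨(p, q), hne⟩⟩

noncomputable def reluHat (δ s : ℝ) : ℝ := relu (s + δ) - 2 * relu s + relu (s - δ)

theorem reluHat_zero {δ : ℝ} (hδ : 0 ≤ δ) : reluHat δ 0 = δ := by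
  simp [reluHat, relu, hδ]

theorem reluHat_eq_zero {δ s : ℝ} (hδ : 0 ≤ δ) (hs : δ ≤ |s|) : reluHat δ s = 0 := by
  unfold reluHat relu
  rcases le_abs'.mp hs with hs | hs
  · rw [max_eq_right (by linarith), max_eq_right (by linarith), max_eq_right (by linarith)]
    ring
  · rw [max_eq_left (by linarith), max_eq_left (by linarith), max_eq_left (by linarith)]
    ring

theorem exists_fin_relu_sum {κ : Type*} [Fintype κ] (a c : κ → ℝ) :
    ∃ (m : ℕ) (a' c' : Fin m → ℝ),
      ∀ s, a' ⬝ᵥ (fun r => relu (s + c' r)) = ∑ k, a k * relu (s + c k) := by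
  let e := Fintype.equivFin κ
  exact ⟨_, a ∘ e.symm, c ∘ e.symm, fun s => e.symm.sum_comp fun k => a k * relu (s + c k)⟩

theorem exists_relu_interpolation {ι : Type*} [Fintype ι] {t : ι → ℝ} (ht : Injective t)
    (f : ι → ℝ) :
    ∃ (m : ℕ) (a c : Fin m → ℝ), ∀ p, a ⬝ᵥ (fun r => relu (t p + c r)) = f p := by
  obtain ⟨δ, hδ, hgap⟩ := exists_pos_le_abs_sub_of_injective ht
  have hsum : ∀ p, ∑ q, f q / δ * reluHat δ (t p - t q) = f p := by
    intro p
    rw [Finset.sum_eq_single p, sub_self, reluHat_zero hδ.le, div_mul_cancel₀ _ hδ.ne']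
    · intro q _ hqp
      rw [reluHat_eq_zero hδ.le (hgap p q hqp.symm), mul_zero]
    · simp
  obtain ⟨m, a, c, hac⟩ := exists_fin_relu_sum
    (fun qk : ι × Fin 3 => f qk.1 / δ * ![1, -2, 1] qk.2) (fun qk => ![δ, 0, -δ] qk.2 - t qk.1)
  refine ⟨m, a, c, fun p => ?_⟩
  rw [hac, ← hsum p, Fintype.sum_prod_type]
  refine Finset.sum_congr rfl fun q _ => ?_
  simp only [Fin.sum_univ_three, reluHat, Matrix.cons_val_zero, Matrix.cons_val_one,
    Matrix.cons_val_two, Matrix.head_cons, Matrix.tail_cons]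
  ring_nf

theorem gatv2ReluScore_of_const_rows {d d' : ℕ} (u : Fin (d + d) → ℝ) (b a : Fin d' → ℝ)
    (q k : Fin d → ℝ) :
    gatv2ReluScore (of fun _ => u) b a q k = a ⬝ᵥ fun r => relu (u ⬝ᵥ Fin.append q k + b r) :=
  rfl

/-- The dynamic-attention property of GATv2 holds with the ReLU activation as well. -/
theorem gatv2_relu_dynamic_attention {d n : ℕ}
    (h : Fin n → Fin d → ℝ) (hdist : Function.Injective h)
    (φ : Fin n → Fin n) :
    ∃ (d' : ℕ) (W : Matrix (Fin d') (Fin (d + d)) ℝ) (b a : Fin d' → ℝ),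
      ∀ i j : Fin n, j ≠ φ i →
        gatv2ReluScore W b a (h i) (h (φ i)) > gatv2ReluScore W b a (h i) (h j) := by
  let x : Fin n × Fin n → Fin (d + d) → ℝ := Fin.appendEquiv d d ∘ Prod.map h h
  have hx : Injective x := (Fin.appendEquiv d d).injective.comp (hdist.prodMap hdist)
  obtain ⟨u, hu⟩ := exists_dotProduct_injective hx
  obtain ⟨m, a, c, hac⟩ :=
    exists_relu_interpolation hu fun p => if p.2 = φ p.1 then (1 : ℝ) else 0
  refine ⟨m, of fun _ => u, c, a, fun i j hj => ?_⟩
  have hscore : ∀ j, gatv2ReluScore (of fun _ => u) c a (h i) (h j) =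
      if j = φ i then 1 else 0 := fun j => by
    rw [gatv2ReluScore_of_const_rows]
    exact hac (i, j)
  rw [hscore, hscore, if_pos rfl, if_neg hj]
  exact one_pos
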